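/- arXiv:1502.07908 — 4 statements merged into one kernel-verified Lean document; each statement's English description precedes it below -/
import Mathlib

section
/- Let a, b, c > 0 be real numbers that are 2-pinched, i.e. λ_i/λ_j ≤ 2 for every pair λ_i, λ_j ∈ {a, b, c}. Then φ_{H³}(a,b,c) := ((a−b)² + (a−c)² + (b−c)²)/(a+b+c)² ≤ 1/8. -/
/-- `φ_{H³}(a,b,c) = ((a−b)² + (a−c)² + (b−c)²)/(a+b+c)²`. -/
noncomputable def phiH3 (a b c : ℝ) : ℝ :=
  ((a - b) ^ 2 + (a - c) ^ 2 + (b - c) ^ 2) / (a + b + c) ^ 2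

/-- A triple `(a,b,c)` of reals is `2`-pinched if `λ_i/λ_j ≤ 2` for all
`λ_i, λ_j ∈ {a,b,c}`. -/
def TwoPinched (a b c : ℝ) : Prop :=
  a / b ≤ 2 ∧ a / c ≤ 2 ∧ b / a ≤ 2 ∧ b / c ≤ 2 ∧ c / a ≤ 2 ∧ c / b ≤ 2

theorem phiH3_le_of_twoPinched (a b c : ℝ) (ha : 0 < a) (hb : 0 < b) (hc : 0 < c)
    (hpinch : TwoPinched a b c) :
    phiH3 a b c ≤ 1 / 8 := by
  obtain ⟨h1, h2, h3, h4, h5, h6⟩ := hpinch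
  rw [div_le_iff₀ hb] at h1
  rw [div_le_iff₀ hc] at h2
  rw [div_le_iff₀ ha] at h3
  rw [div_le_iff₀ hc] at h4
  rw [div_le_iff₀ ha] at h5
  rw [div_le_iff₀ hb] at h6
  rw [phiH3, div_le_iff₀ (by positivity)]
  nlinarith [mul_nonneg (sub_nonneg.2 h1) (sub_nonneg.2 h1), mul_nonneg (sub_nonneg.2 h1) (sub_nonneg.2 h2), mul_nonneg (sub_nonneg.2 h1) (sub_nonneg.2 h3), mul_nonneg (sub_nonneg.2 h1) (sub_nonneg.2 h4), mul_nonneg (sub_nonneg.2 h1) (sub_nonneg.2 h5), mul_nonneg (sub_nonneg.2 h1) (sub_nonneg.2 h6), mul_nonneg (sub_nonneg.2 h2) (sub_nonneg.2 h2), mul_nonneg (sub_nonneg.2 h2) (sub_nonneg.2 h3), mul_nonneg (sub_nonneg.2 h2) (sub_nonneg.2 h4), mul_nonneg (sub_nonneg.2 h2) (sub_nonneg.2 h5), mul_nonneg (sub_nonneg.2 h2) (sub_nonneg.2 h6), mul_nonneg (sub_nonneg.2 h3) (sub_nonneg.2 h3), mul_nonneg (sub_nonneg.2 h3) (sub_nonneg.2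 h4), mul_nonneg (sub_nonneg.2 h3) (sub_nonneg.2 h5), mul_nonneg (sub_nonneg.2 h3) (sub_nonneg.2 h6), mul_nonneg (sub_nonneg.2 h4) (sub_nonneg.2 h4), mul_nonneg (sub_nonneg.2 h4) (sub_nonneg.2 h5), mul_nonneg (sub_nonneg.2 h4) (sub_nonneg.2 h6), mul_nonneg (sub_nonneg.2 h5) (sub_nonneg.2 h5), mul_nonneg (sub_nonneg.2 h5) (sub_nonneg.2 h6), mul_nonneg (sub_nonneg.2 h6) (sub_nonneg.2 h6)]
end

section
/- The supremum of φ_{H³}(a,b,c) := ((a−b)² + (a−c)² + (b−c)²)/(a+b+c)² over the 2-pinched cone {(a,b,c) ∈ ℝ³₊ : λ_i/λ_j ≤ 2 for all λ_i, λ_j ∈ {a,b,c}} equals 1/8, and it is attained at (a,b,c) = (1,1,2). -/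
/-- The supremum of `φ_{H³}` over the `2`-pinched cone in the positive orthant
equals `1/8`, and it is attained at `(a,b,c) = (1,1,2)`. -/
theorem isGreatest_phiH3_twoPinched :
    IsGreatest {x : ℝ | ∃ a b c : ℝ, 0 < a ∧ 0 < b ∧ 0 < c ∧ TwoPinched a b c ∧
      phiH3 a b c = x} (1 / 8) ∧
    TwoPinched 1 1 2 ∧ phiH3 1 1 2 = 1 / 8 := by
  have hpin : TwoPinched 1 1 2 := by
    unfold TwoPinched; norm_num
  have hval : phiH3 1 1 2 = 1 / 8 := by
    unfold phiH3; norm_num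
  refine ⟨⟨⟨1, 1, 2, one_pos, one_pos, two_pos, hpin, hval⟩, ?_⟩, hpin, hval⟩
  rintro x ⟨a, b, c, ha, hb, hc, ⟨h1, h2, h3, h4, h5, h6⟩, rfl⟩
  have e1 : a ≤ 2 * b := by rwa [div_le_iff₀ hb] at h1
  have e2 : a ≤ 2 * c := by rwa [div_le_iff₀ hc] at h2
  have e3 : b ≤ 2 * a := by rwa [div_le_iff₀ ha] at h3
  have e4 : b ≤ 2 * c := by rwa [div_le_iff₀ hc] at h4
  have e5 : c ≤ 2 * a := by rwa [div_le_iff₀ ha] at h5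
  have e6 : c ≤ 2 * b := by rwa [div_le_iff₀ hb] at h6
  have hs : (0:ℝ) < (a + b + c) ^ 2 := by positivity
  rw [phiH3, div_le_div_iff₀ hs (by norm_num)]
  nlinarith [mul_nonneg (sub_nonneg.2 e1) (sub_nonneg.2 e3),
    mul_nonneg (sub_nonneg.2 e2) (sub_nonneg.2 e5),
    mul_nonneg (sub_nonneg.2 e4) (sub_nonneg.2 e6),
    mul_nonneg (sub_nonneg.2 e1) (sub_nonneg.2 e2),
    mul_nonneg (sub_nonneg.2 e3) (sub_nonneg.2 e4),
    mul_nonneg (sub_nonneg.2 e5) (sub_nonneg.2 e6),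
    sq_nonneg (a - b), sq_nonneg (a - c), sq_nonneg (b - c),
    mul_pos ha hb, mul_pos ha hc, mul_pos hb hc]
end

section
/- Let n ≥ 2 and let F be a differentiable real-valued function on the positive orthant ℝⁿ₊. Define v(λ) := (Σ_{i<j} (λ_i − λ_j)²/(λ_i λ_j)²)·F(λ)². Then the constant term C_v(λ) := Σ_{i=1}^n λ_i (∂v/∂λ_i)(λ)·( Σ_{k=1}^n λ_k² (∂F/∂λ_k)(λ) + λ_i( F(λ) − Σ_{k=1}^n λ_k (∂F/∂λ_k)(λ) ) ) vanishes identically on ℝⁿ₊; that is, v is a vanishing function for the normal velocity F. -/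
/-- The partial derivative `∂F/∂λ_k` of a function on `ℝⁿ`. -/
noncomputable def pder (n : ℕ) (F : (Fin n → ℝ) → ℝ) (x : Fin n → ℝ) (k : Fin n) : ℝ :=
  fderiv ℝ F x (Pi.single k 1)

/-- The constant term `C_w` of the linear operator `L` associated to the normal
velocity `F`:
`C_w(λ) = Σ_i λ_i (∂w/∂λ_i)·( Σ_k λ_k² (∂F/∂λ_k) + λ_i( F − Σ_k λ_k (∂F/∂λ_k) ) )`. -/
noncomputable def Cterm (n : ℕ) (w F : (Fin n → ℝ) → ℝ) (x : Fin n → ℝ) : ℝ :=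
  ∑ i, x i * pder n w x i *
    ((∑ k, (x k) ^ 2 * pder n F x k) + x i * (F x - ∑ k, x k * pder n F x k))

lemma sum_mul_apply_single {n : ℕ} (L : (Fin n → ℝ) →L[ℝ] ℝ) (u : Fin n → ℝ) :
    ∑ i, u i * L (Pi.single i 1) = L u := by
  have hu : u = ∑ i, u i • (Pi.single i 1 : Fin n → ℝ) := by
    funext j
    simp [Finset.sum_apply, Pi.single_apply]
  conv_rhs => rw [hu]
  rw [map_sum]
  refine Finset.sum_congr rfl fun i _ => ?_
  rw [map_smul, smul_eq_mul]

lemma pair_deriv {n : ℕ} (a b : Fin n) (x : Fin n → ℝ) (ha : x a ≠ 0) (hb : x b ≠ 0) :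
    ∃ L : (Fin n → ℝ) →L[ℝ] ℝ,
      HasFDerivAt (fun y : Fin n → ℝ => (y a - y b) ^ 2 / (y a * y b) ^ 2) L x ∧
      L x = -2 * ((x a - x b) ^ 2 / (x a * x b) ^ 2) ∧
      L (fun i => x i ^ 2) = 0 := by
  have ha' : HasFDerivAt (fun y : Fin n → ℝ => y a)
      (ContinuousLinearMap.proj (R := ℝ) (φ := fun _ : Fin n => ℝ) a) x :=
    hasFDerivAt_apply a x
  have hb' : HasFDerivAt (fun y : Fin n → ℝ => y b)
      (ContinuousLinearMap.proj (R := ℝ) (φ := fun _ : Fin n => ℝ) b) x :=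
    hasFDerivAt_apply b x
  set pa := ContinuousLinearMap.proj (R := ℝ) (φ := fun _ : Fin n => ℝ) a with hpa
  set pb := ContinuousLinearMap.proj (R := ℝ) (φ := fun _ : Fin n => ℝ) b with hpb
  have hN : HasFDerivAt (fun y : Fin n → ℝ => (y a - y b) ^ 2)
      ((x a - x b) • (pa - pb) + (x a - x b) • (pa - pb)) x := by
    simpa only [← pow_two] using (ha'.fun_sub hb').fun_mul (ha'.fun_sub hb')
  have hD : HasFDerivAt (fun y : Fin n → ℝ => (y a * y b) ^ 2)
      ((x a * x b) • (x a • pb + x b • pa) + (x a * x b) • (x a • pb + x b • pa)) x := by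
    simpa only [← pow_two] using (ha'.fun_mul hb').fun_mul (ha'.fun_mul hb')
  have hD0 : (x a * x b) ^ 2 ≠ 0 := pow_ne_zero _ (mul_ne_zero ha hb)
  have hInv : HasFDerivAt (fun y : Fin n → ℝ => ((y a * y b) ^ 2)⁻¹)
      ((-ContinuousLinearMap.mulLeftRight ℝ ℝ (((x a * x b) ^ 2)⁻¹) (((x a * x b) ^ 2)⁻¹)).comp
        ((x a * x b) • (x a • pb + x b • pa) + (x a * x b) • (x a • pb + x b • pa))) x := by
    simpa only [Function.comp_def] using (hasFDerivAt_inv' hD0).comp x hD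
  have hL := hN.fun_mul hInv
  refine ⟨_, by simpa only [div_eq_mul_inv] using hL, ?_, ?_⟩ <;>
  · simp only [hpa, hpb, ContinuousLinearMap.smul_apply, ContinuousLinearMap.sub_apply,
      ContinuousLinearMap.add_apply, ContinuousLinearMap.comp_apply,
      ContinuousLinearMap.neg_apply, ContinuousLinearMap.mulLeftRight_apply,
      ContinuousLinearMap.proj_apply, smul_eq_mul]
    field_simp
    ring

/-- The quantity `v(λ) = (Σ_{i<j} (λ_i − λ_j)²/(λ_i λ_j)²)·F(λ)²` is a vanishing
function for the normal velocity `F`: its constant term `C_v` vanishes identically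
on the positive orthant. -/
theorem vanishing_function_full (n : ℕ) (hn : 2 ≤ n) (F : (Fin n → ℝ) → ℝ)
    (hF : DifferentiableOn ℝ F {x : Fin n → ℝ | ∀ i, 0 < x i})
    (x : Fin n → ℝ) (hx : x ∈ {x : Fin n → ℝ | ∀ i, 0 < x i}) :
    Cterm n
      (fun y => (∑ p ∈ Finset.univ.filter (fun p : Fin n × Fin n => p.1 < p.2),
        (y p.1 - y p.2) ^ 2 / (y p.1 * y p.2) ^ 2) * (F y) ^ 2)
      F x = 0 := by
  have hxo : IsOpen {y : Fin n → ℝ | ∀ i, 0 < y i} := by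
    have : {y : Fin n → ℝ | ∀ i, 0 < y i} = Set.pi Set.univ (fun _ => Set.Ioi (0:ℝ)) := by
      ext y; simp [Set.mem_pi]
    rw [this]
    exact isOpen_set_pi Set.finite_univ (fun i _ => isOpen_Ioi)
  have hFd : DifferentiableAt ℝ F x := hF.differentiableAt (hxo.mem_nhds hx)
  set LF := fderiv ℝ F x with hLF
  have hF' : HasFDerivAt F LF x := hFd.hasFDerivAt
  have key : ∀ p : Fin n × Fin n, ∃ L : (Fin n → ℝ) →L[ℝ] ℝ,
      HasFDerivAt (fun y : Fin n → ℝ => (y p.1 - y p.2) ^ 2 / (y p.1 * y p.2) ^ 2) L x ∧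
      L x = -2 * ((x p.1 - x p.2) ^ 2 / (x p.1 * x p.2) ^ 2) ∧
      L (fun i => x i ^ 2) = 0 :=
    fun p => pair_deriv p.1 p.2 x (hx p.1).ne' (hx p.2).ne'
  choose L hL1 hL2 hL3 using key
  set pairs := Finset.univ.filter (fun p : Fin n × Fin n => p.1 < p.2) with hpairs
  set LG := ∑ p ∈ pairs, L p with hLG
  have hg : HasFDerivAt
      (fun y : Fin n → ℝ => ∑ p ∈ pairs, (y p.1 - y p.2) ^ 2 / (y p.1 * y p.2) ^ 2) LG x :=
    HasFDerivAt.fun_sum (fun p _ => hL1 p)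
  set g : ℝ := ∑ p ∈ pairs, (x p.1 - x p.2) ^ 2 / (x p.1 * x p.2) ^ 2 with hgdef
  have hLGx : LG x = -2 * g := by
    rw [hLG, ContinuousLinearMap.sum_apply, hgdef, Finset.mul_sum]
    exact Finset.sum_congr rfl (fun p _ => hL2 p)
  have hLGq : LG (fun i => x i ^ 2) = 0 := by
    rw [hLG, ContinuousLinearMap.sum_apply]
    exact Finset.sum_eq_zero (fun p _ => hL3 p)
  have hF2 : HasFDerivAt (fun y => (F y) ^ 2) (F x • LF + F x • LF) x := by
    simpa only [← pow_two] using hF'.fun_mul hF'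
  set LV := g • (F x • LF + F x • LF) + (F x ^ 2) • LG with hLV
  have hv : HasFDerivAt
      (fun y => (∑ p ∈ pairs, (y p.1 - y p.2) ^ 2 / (y p.1 * y p.2) ^ 2) * (F y) ^ 2) LV x :=
    hg.mul hF2
  unfold Cterm pder
  rw [hv.fderiv]
  simp only [← hLF]
  have e1 : ∀ u : Fin n → ℝ, ∑ i, u i * LF (Pi.single i 1) = LF u :=
    fun u => sum_mul_apply_single LF u
  have hA : ∑ k, (x k) ^ 2 * LF (Pi.single k 1) = LF (fun i => x i ^ 2) := by
    simpa using sum_mul_apply_single LF (fun i => x i ^ 2)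
  have hP : ∑ k, x k * LF (Pi.single k 1) = LF x := sum_mul_apply_single LF x
  rw [hA, hP]
  set A := LF (fun i => x i ^ 2) with hAdef
  set P := LF x with hPdef
  have expand : ∑ i, x i * LV (Pi.single i 1) * (A + x i * (F x - P))
      = A * LV x + (F x - P) * LV (fun i => x i ^ 2) := by
    rw [← sum_mul_apply_single LV x, ← sum_mul_apply_single LV (fun i => x i ^ 2),
      Finset.mul_sum, Finset.mul_sum, ← Finset.sum_add_distrib]
    exact Finset.sum_congr rfl (fun i _ => by ring)
  rw [expand]
  have hLVx : LV x = g * (F x * P + F x * P) + F x ^ 2 * (-2 * g) := by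
    rw [hLV]
    simp only [ContinuousLinearMap.add_apply, ContinuousLinearMap.smul_apply, smul_eq_mul,
      hLGx, ← hPdef]
  have hLVq : LV (fun i => x i ^ 2) = g * (F x * A + F x * A) := by
    rw [hLV]
    simp only [ContinuousLinearMap.add_apply, ContinuousLinearMap.smul_apply, smul_eq_mul,
      hLGq, ← hAdef, mul_zero, add_zero]
  rw [hLVx, hLVq]
  ring
end

section
/- Let n ≥ 2 and let F be a differentiable real-valued function on the positive orthant ℝⁿ₊. Let P be a nonempty subset of the set of pairs {(i,j) : 1 ≤ i < j ≤ n} whose complement has at most n−1 elements, and define v_P(λ) := (Σ_{(i,j)∈P} (λ_i − λ_j)²/(λ_i λ_j)²)·F(λ)². Then the constant term C_{v_P}(λ) := Σ_{i=1}^n λ_i (∂v_P/∂λ_i)(λ)·( Σ_{k=1}^n λ_k² (∂F/∂λ_k)(λ) + λ_i( F(λ) − Σ_{k=1}^n λ_k (∂F/∂λ_k)(λ) ) ) vanishes identically on ℝⁿ₊; that is, omitting up to n−1 of the pair terms from the full vanishing function still yields a vanishing function for F. -/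
section helpers
variable {n : ℕ} {f g : (Fin n → ℝ) → ℝ} {x : Fin n → ℝ}

lemma diffAt_proj (a : Fin n) : DifferentiableAt ℝ (fun y : Fin n → ℝ => y a) x :=
  (ContinuousLinearMap.proj (R := ℝ) (φ := fun _ : Fin n => ℝ) a).differentiableAt

lemma pder_proj (a k : Fin n) : pder n (fun y => y a) x k = Pi.single (M := fun _ : Fin n => ℝ) k 1 a := by
  have h : HasFDerivAt (fun y : Fin n → ℝ => y a)
      (ContinuousLinearMap.proj (R := ℝ) (φ := fun _ : Fin n => ℝ) a) x :=
    (ContinuousLinearMap.proj (R := ℝ) (φ := fun _ : Fin n => ℝ) a).hasFDerivAt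
  rw [pder, h.fderiv]
  simp

lemma pder_sub (hf : DifferentiableAt ℝ f x) (hg : DifferentiableAt ℝ g x) (k : Fin n) :
    pder n (fun y => f y - g y) x k = pder n f x k - pder n g x k := by
  rw [pder, fderiv_fun_sub hf hg]; rfl

lemma pder_mul (hf : DifferentiableAt ℝ f x) (hg : DifferentiableAt ℝ g x) (k : Fin n) :
    pder n (fun y => f y * g y) x k = f x * pder n g x k + g x * pder n f x k := by
  rw [pder, fderiv_fun_mul hf hg]; rfl

lemma pder_sq (hf : DifferentiableAt ℝ f x) (k : Fin n) :
    pder n (fun y => f y ^ 2) x k = 2 * f x * pder n f x k := by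
  have h : HasFDerivAt (fun y => f y ^ 2) (((2 : ℕ) * f x ^ (2 - 1) : ℝ) • fderiv ℝ f x) x :=
    (hasDerivAt_pow 2 (f x)).comp_hasFDerivAt x hf.hasFDerivAt
  rw [pder, h.fderiv]
  simp [pder]

lemma diffAt_inv (hg : DifferentiableAt ℝ g x) (hx : g x ≠ 0) :
    DifferentiableAt ℝ (fun y => (g y)⁻¹) x :=
  ((hasDerivAt_inv hx).comp_hasFDerivAt x hg.hasFDerivAt).differentiableAt

lemma diffAt_div (hf : DifferentiableAt ℝ f x) (hg : DifferentiableAt ℝ g x) (hx : g x ≠ 0) :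
    DifferentiableAt ℝ (fun y => f y / g y) x := by
  simp only [div_eq_mul_inv]
  exact hf.mul (diffAt_inv hg hx)

lemma pder_div (hf : DifferentiableAt ℝ f x) (hg : DifferentiableAt ℝ g x) (hx : g x ≠ 0)
    (k : Fin n) :
    pder n (fun y => f y / g y) x k
      = (pder n f x k * g x - f x * pder n g x k) / g x ^ 2 := by
  have h1 : HasFDerivAt (fun y => (g y)⁻¹) ((-(g x ^ 2)⁻¹) • fderiv ℝ g x) x :=
    (hasDerivAt_inv hx).comp_hasFDerivAt x hg.hasFDerivAt
  have h2 := hf.hasFDerivAt.fun_mul h1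
  simp only [← div_eq_mul_inv] at h2
  rw [pder, h2.fderiv]
  simp only [ContinuousLinearMap.add_apply, ContinuousLinearMap.smul_apply, smul_eq_mul]
  rw [pder, pder]
  field_simp
  ring

lemma pder_sum {ι : Type*} (s : Finset ι) (f : ι → (Fin n → ℝ) → ℝ)
    (hf : ∀ p ∈ s, DifferentiableAt ℝ (f p) x) (k : Fin n) :
    pder n (fun y => ∑ p ∈ s, f p y) x k = ∑ p ∈ s, pder n (f p) x k := by
  rw [pder, fderiv_fun_sum hf]
  simp [pder]

end helpers

section pair
variable {n : ℕ} {x : Fin n → ℝ}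

lemma diffAt_pair (hx : ∀ i, 0 < x i) (a b : Fin n) :
    DifferentiableAt ℝ (fun y : Fin n → ℝ => (y a - y b) ^ 2 / (y a * y b) ^ 2) x := by
  apply diffAt_div
  · exact ((diffAt_proj a).sub (diffAt_proj b)).pow 2
  · exact ((diffAt_proj a).mul (diffAt_proj b)).pow 2
  · exact pow_ne_zero 2 (mul_pos (hx a) (hx b)).ne'

lemma pder_pair (hx : ∀ i, 0 < x i) (a b : Fin n) (k : Fin n) :
    pder n (fun y => (y a - y b) ^ 2 / (y a * y b) ^ 2) x k
      = ((2 * (x a - x b) * (x a * x b) ^ 2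
            - (x a - x b) ^ 2 * (2 * (x a * x b) * x b)) / ((x a * x b) ^ 2) ^ 2)
          * Pi.single (M := fun _ : Fin n => ℝ) k 1 a
        + ((-(2 * (x a - x b)) * (x a * x b) ^ 2
            - (x a - x b) ^ 2 * (2 * (x a * x b) * x a)) / ((x a * x b) ^ 2) ^ 2)
          * Pi.single (M := fun _ : Fin n => ℝ) k 1 b := by
  have ha := diffAt_proj (x := x) a
  have hb := diffAt_proj (x := x) b
  have hab : x a * x b ≠ 0 := (mul_pos (hx a) (hx b)).ne'
  have habs : (x a * x b) ^ 2 ≠ 0 := pow_ne_zero 2 hab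
  rw [pder_div (((diffAt_proj a).fun_sub (diffAt_proj b)).fun_pow 2)
      (((diffAt_proj a).fun_mul (diffAt_proj b)).fun_pow 2) habs k]
  rw [pder_sq ((diffAt_proj a).fun_sub (diffAt_proj b)) k,
      pder_sq ((diffAt_proj a).fun_mul (diffAt_proj b)) k,
      pder_sub ha hb k, pder_mul ha hb k, pder_proj a k, pder_proj b k]
  field_simp
  ring

lemma pair_sum1 (hx : ∀ i, 0 < x i) (a b : Fin n) (hab : a ≠ b) :
    ∑ k, x k * pder n (fun y => (y a - y b) ^ 2 / (y a * y b) ^ 2) x k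
      = -2 * ((x a - x b) ^ 2 / (x a * x b) ^ 2) := by
  simp only [pder_pair hx a b, Pi.single_apply, mul_ite, mul_one, mul_zero, mul_add]
  rw [Finset.sum_add_distrib]
  simp only [Finset.sum_ite_eq, Finset.mem_univ, if_true]
  have h1 : x a ≠ 0 := (hx a).ne'
  have h2 : x b ≠ 0 := (hx b).ne'
  field_simp
  ring

lemma pair_sum2 (hx : ∀ i, 0 < x i) (a b : Fin n) (hab : a ≠ b) :
    ∑ k, (x k) ^ 2 * pder n (fun y => (y a - y b) ^ 2 / (y a * y b) ^ 2) x k = 0 := by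
  simp only [pder_pair hx a b, Pi.single_apply, mul_ite, mul_one, mul_zero, mul_add]
  rw [Finset.sum_add_distrib]
  simp only [Finset.sum_ite_eq, Finset.mem_univ, if_true]
  have h1 : x a ≠ 0 := (hx a).ne'
  have h2 : x b ≠ 0 := (hx b).ne'
  field_simp
  ring

end pair


/-- Omitting up to `n−1` of the pair terms from the full vanishing function
`Σ_{i<j} (λ_i − λ_j)²/(λ_i λ_j)² · F²` still yields a vanishing function for `F`:
for a nonempty set `P` of pairs whose complement has at most `n−1` elements,
the constant term of `v_P(λ) = (Σ_{(i,j)∈P} (λ_i − λ_j)²/(λ_i λ_j)²)·F(λ)²`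
vanishes identically on the positive orthant. -/
theorem vanishing_function_omit_pairs (n : ℕ) (hn : 2 ≤ n) (F : (Fin n → ℝ) → ℝ)
    (hF : DifferentiableOn ℝ F {x : Fin n → ℝ | ∀ i, 0 < x i})
    (P : Finset (Fin n × Fin n))
    (hPsub : P ⊆ Finset.univ.filter (fun p : Fin n × Fin n => p.1 < p.2))
    (hPne : P.Nonempty)
    (hPcard : ((Finset.univ.filter (fun p : Fin n × Fin n => p.1 < p.2)) \ P).card ≤ n - 1)
    (x : Fin n → ℝ) (hx : x ∈ {x : Fin n → ℝ | ∀ i, 0 < x i}) :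
    Cterm n
      (fun y => (∑ p ∈ P, (y p.1 - y p.2) ^ 2 / (y p.1 * y p.2) ^ 2) * (F y) ^ 2)
      F x = 0 := by
  have hxp : ∀ i, 0 < x i := hx
  -- the positive orthant is open
  have hU : IsOpen {x : Fin n → ℝ | ∀ i, 0 < x i} := by
    have : {x : Fin n → ℝ | ∀ i, 0 < x i} = ⋂ i, {x : Fin n → ℝ | 0 < x i} := by
      ext y; simp
    rw [this]
    exact isOpen_iInter_of_finite fun i => isOpen_lt continuous_const (continuous_apply i)
  have hFd : DifferentiableAt ℝ F x := hF.differentiableAt (hU.mem_nhds hx)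
  set g : (Fin n → ℝ) → ℝ :=
    fun y => ∑ p ∈ P, (y p.1 - y p.2) ^ 2 / (y p.1 * y p.2) ^ 2 with hg
  have hdp : ∀ p ∈ P, DifferentiableAt ℝ
      (fun y : Fin n → ℝ => (y p.1 - y p.2) ^ 2 / (y p.1 * y p.2) ^ 2) x :=
    fun p _ => diffAt_pair hxp p.1 p.2
  have hgd : DifferentiableAt ℝ g x := DifferentiableAt.fun_sum hdp
  have hne : ∀ p ∈ P, p.1 ≠ p.2 := by
    intro p hp
    exact ne_of_lt (Finset.mem_filter.mp (hPsub hp)).2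
  -- derivative of g
  have hpg : ∀ k, pder n g x k = ∑ p ∈ P,
      pder n (fun y : Fin n → ℝ => (y p.1 - y p.2) ^ 2 / (y p.1 * y p.2) ^ 2) x k :=
    fun k => pder_sum P _ hdp k
  -- the two Euler-type identities for g
  have hsum1 : ∑ i, x i * pder n g x i = -2 * g x := by
    simp only [hpg, Finset.mul_sum]
    rw [Finset.sum_comm]
    rw [hg]
    rw [Finset.mul_sum]
    refine Finset.sum_congr rfl fun p hp => ?_
    rw [pair_sum1 hxp p.1 p.2 (hne p hp)]
  have hsum2 : ∑ i, (x i) ^ 2 * pder n g x i = 0 := by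
    simp only [hpg, Finset.mul_sum]
    rw [Finset.sum_comm]
    refine Finset.sum_eq_zero fun p hp => ?_
    exact pair_sum2 hxp p.1 p.2 (hne p hp)
  -- derivative of w = g * F^2
  have hpw : ∀ i, pder n (fun y => g y * F y ^ 2) x i
      = g x * (2 * F x * pder n F x i) + F x ^ 2 * pder n g x i := by
    intro i
    rw [pder_mul hgd (hFd.fun_pow 2) i, pder_sq hFd i]
  set S := ∑ k, (x k) ^ 2 * pder n F x k with hS
  set T := ∑ k, x k * pder n F x k with hT
  have hA : ∑ i, x i * pder n (fun y => g y * F y ^ 2) x i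
      = 2 * g x * F x * T + F x ^ 2 * (-2 * g x) := by
    have : ∀ i ∈ Finset.univ, x i * pder n (fun y => g y * F y ^ 2) x i
        = 2 * g x * F x * (x i * pder n F x i) + F x ^ 2 * (x i * pder n g x i) := by
      intro i _; rw [hpw i]; ring
    rw [Finset.sum_congr rfl this, Finset.sum_add_distrib, ← Finset.mul_sum, ← Finset.mul_sum,
      hsum1, ← hT]
  have hB : ∑ i, (x i) ^ 2 * pder n (fun y => g y * F y ^ 2) x i
      = 2 * g x * F x * S := by
    have : ∀ i ∈ Finset.univ, (x i) ^ 2 * pder n (fun y => g y * F y ^ 2) x i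
        = 2 * g x * F x * ((x i) ^ 2 * pder n F x i) + F x ^ 2 * ((x i) ^ 2 * pder n g x i) := by
      intro i _; rw [hpw i]; ring
    rw [Finset.sum_congr rfl this, Finset.sum_add_distrib, ← Finset.mul_sum, ← Finset.mul_sum,
      hsum2, ← hS]
    ring
  -- assemble
  rw [Cterm]
  have expand : ∀ i ∈ Finset.univ, x i * pder n (fun y => g y * F y ^ 2) x i * (S + x i * (F x - T))
      = (x i * pder n (fun y => g y * F y ^ 2) x i) * S
        + ((x i) ^ 2 * pder n (fun y => g y * F y ^ 2) x i) * (F x - T) := by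
    intro i _; ring
  rw [show (fun y => (∑ p ∈ P, (y p.1 - y p.2) ^ 2 / (y p.1 * y p.2) ^ 2) * (F y) ^ 2)
      = fun y => g y * F y ^ 2 from rfl]
  rw [← hS, ← hT, Finset.sum_congr rfl expand, Finset.sum_add_distrib,
    ← Finset.sum_mul, ← Finset.sum_mul, hA, hB]
  ring
end
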